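/- arXiv:2207.04950 — 2 statements merged into one kernel-verified Lean document; each statement's English description precedes it below -/
import Mathlib

section
/- Let $\alpha > 1$, $\beta > 0$, and let $(a_i)_{i\ge 1}, (d_j)_{j\ge 1}$ be positive sequences with $a_i \le C_1 i^{-\alpha}$, $d_j \le C_2 j^{-\beta}$, and $(d_j)$ monotonically decreasing. Suppose there is $C < \infty$ such that a doubly-indexed real array $(c_{i,j})_{i,j\in\mathbb{N}}$ satisfies $\sum_{j\in\mathbb{N}} c_{i,j}^2 d_j^{-2} \le C^2 a_i^2$ for every $i$. Then for every $\delta > 0$ there exists a constant $K$ such that for every $N\in\mathbb{N}$ there exists a monotonically decreasing sequence $(m_i)_{i\in\mathbb{N}} \subseteq \mathbb{N}_0$ with $\sum_{i\in\mathbb{N}} m_i \le N$ and $\sum_{i\in\mathbb{N}} \big(\sum_{j > m_i} c_{i,j}^2\big)^{1/2} \le K\, N^{-\min\{\alpha-1,\beta\}+\delta}$. -/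
/-! The budget `N` is spread as `m i = ⌊M (i+1)^{-p}⌋` with `p > 1` and
`M = N / ∑ (i+1)^{-p}`, so that `∑ m i ≤ N`. Since `d` is decreasing, the tail
`∑_{j ≥ m i} c i j ^ 2` is at most `d (m i) ^ 2 ∑ c i j ^ 2 / d j ^ 2 ≤ (C a_i d (m i))^2`,
and `d (m i) ≲ (m i + 1)^{-s} ≲ M^{-s} (i+1)^{p s}` for any `s ≤ β`. Hence the `i`-th term is
`≲ M^{-s} (i+1)^{-(α - p s)}`, which is summable as soon as `p s < α - 1`; taking `s` just
below `min (α - 1) β` and `p` just above `1` gives the rate. -/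

open Real

lemma summable_nat_add_one_rpow_neg {r : ℝ} (hr : 1 < r) :
    Summable fun i : ℕ => ((i : ℝ) + 1) ^ (-r) := by
  simpa using (summable_nat_add_iff 1).2 (summable_nat_rpow.2 (neg_lt_neg hr))

lemma tsum_nat_add_one_rpow_neg_pos {r : ℝ} (hr : 1 < r) :
    0 < ∑' i : ℕ, ((i : ℝ) + 1) ^ (-r) :=
  (summable_nat_add_one_rpow_neg hr).tsum_pos (fun _ => by positivity) 0 (by positivity)

lemma exists_exponents_lt {α β δ : ℝ} (hα : 1 < α) (hβ : 0 < β) (hδ : 0 < δ) :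
    ∃ s p : ℝ, 0 < s ∧ s ≤ β ∧ -s ≤ -min (α - 1) β + δ ∧ 1 < p ∧ 1 < α - p * s := by
  set γ := min (α - 1) β
  have hγ : 0 < γ := lt_min (by linarith) hβ
  set s := max (γ - δ) (γ / 2)
  have hs : 0 < s := lt_max_of_lt_right (by positivity)
  have hsγ : s < γ := max_lt (by linarith) (by linarith)
  have hsα : s < α - 1 := hsγ.trans_le (min_le_left _ _)
  refine ⟨s, (s + (α - 1)) / (2 * s), hs, hsγ.le.trans (min_le_right _ _),
    by linarith [le_max_left (γ - δ) (γ / 2)], ?_, ?_⟩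
  · rw [one_lt_div (by positivity)]
    linarith
  · have hps : (s + (α - 1)) / (2 * s) * s = (s + (α - 1)) / 2 := by field_simp
    linarith

section Tail

variable {c d : ℕ → ℝ}

lemma sq_le_div_sq_mul_sq_of_le (hd : Antitone d) (hdpos : ∀ j, 0 < d j) {m j : ℕ}
    (hmj : m ≤ j) : c j ^ 2 ≤ c j ^ 2 / d j ^ 2 * d m ^ 2 := by
  rw [div_mul_eq_mul_div, le_div_iff₀ (pow_pos (hdpos j) 2)]
  gcongr
  exacts [(hdpos j).le, hd hmj]

lemma summable_tail_sq (hd : Antitone d) (hdpos : ∀ j, 0 < d j)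
    (hc : Summable fun j => c j ^ 2 / d j ^ 2) (m : ℕ) :
    Summable fun j : {j : ℕ // m ≤ j} => c j ^ 2 :=
  .of_nonneg_of_le (fun _ => sq_nonneg _) (fun j => sq_le_div_sq_mul_sq_of_le hd hdpos j.2)
    ((hc.subtype {j | m ≤ j}).mul_right (d m ^ 2))

lemma tsum_tail_sq_le (hd : Antitone d) (hdpos : ∀ j, 0 < d j)
    (hc : Summable fun j => c j ^ 2 / d j ^ 2) (m : ℕ) :
    ∑' j : {j : ℕ // m ≤ j}, c j ^ 2 ≤ d m ^ 2 * ∑' j, c j ^ 2 / d j ^ 2 := calc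
  _ ≤ ∑' j : {j : ℕ // m ≤ j}, c j ^ 2 / d j ^ 2 * d m ^ 2 :=
      (summable_tail_sq hd hdpos hc m).tsum_le_tsum
        (fun j => sq_le_div_sq_mul_sq_of_le hd hdpos j.2) ((hc.subtype {j | m ≤ j}).mul_right _)
  _ = (∑' j : {j : ℕ // m ≤ j}, c j ^ 2 / d j ^ 2) * d m ^ 2 := tsum_mul_right
  _ ≤ (∑' j, c j ^ 2 / d j ^ 2) * d m ^ 2 := by
      gcongr
      exact hc.tsum_subtype_le _ {j | m ≤ j} fun _ => by positivity
  _ = _ := mul_comm _ _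

lemma sqrt_tsum_tail_sq_le (hd : Antitone d) (hdpos : ∀ j, 0 < d j)
    (hc : Summable fun j => c j ^ 2 / d j ^ 2) {A : ℝ} (hA : 0 ≤ A)
    (hcA : ∑' j, c j ^ 2 / d j ^ 2 ≤ A ^ 2) (m : ℕ) :
    √(∑' j : {j : ℕ // m ≤ j}, c j ^ 2) ≤ d m * A := by
  refine sqrt_le_iff.2 ⟨mul_nonneg (hdpos m).le hA, ?_⟩
  calc _ ≤ d m ^ 2 * ∑' j, c j ^ 2 / d j ^ 2 := tsum_tail_sq_le hd hdpos hc m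
    _ ≤ d m ^ 2 * A ^ 2 := by gcongr
    _ = (d m * A) ^ 2 := (mul_pow _ _ _).symm

end Tail

section PowerAllocation

noncomputable def powerAllocation (M p : ℝ) (i : ℕ) : ℕ := ⌊M * ((i : ℝ) + 1) ^ (-p)⌋₊

variable {M p : ℝ}

lemma powerAllocation_antitone (hM : 0 ≤ M) (hp : 0 ≤ p) : Antitone (powerAllocation M p) := by
  intro i j hij
  refine Nat.floor_le_floor (mul_le_mul_of_nonneg_left ?_ hM)
  exact rpow_le_rpow_of_nonpos (by positivity) (by gcongr) (neg_nonpos.2 hp)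

lemma sum_powerAllocation_le (hM : 0 ≤ M) (hp : 1 < p) (F : Finset ℕ) :
    (∑ i ∈ F, powerAllocation M p i : ℝ) ≤ M * ∑' i : ℕ, ((i : ℝ) + 1) ^ (-p) := by
  rw [← tsum_mul_left]
  refine (Finset.sum_le_sum fun i _ => Nat.floor_le (by positivity)).trans ?_
  exact (summable_nat_add_one_rpow_neg hp).mul_left M |>.sum_le_tsum F fun _ _ => by positivity

lemma apply_powerAllocation_le {d : ℕ → ℝ} {C β s : ℝ}
    (hd : ∀ j : ℕ, d j ≤ C * ((j : ℝ) + 1) ^ (-β)) (hC : 0 ≤ C) (hM : 0 < M) (hs : 0 ≤ s)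
    (hsβ : s ≤ β) (i : ℕ) :
    d (powerAllocation M p i) ≤ C * (M ^ (-s) * ((i : ℝ) + 1) ^ (p * s)) := by
  set x := M * ((i : ℝ) + 1) ^ (-p)
  have hx : 0 < x := by positivity
  calc d (powerAllocation M p i) ≤ C * ((powerAllocation M p i : ℝ) + 1) ^ (-β) := hd _
    _ ≤ C * ((powerAllocation M p i : ℝ) + 1) ^ (-s) :=
        mul_le_mul_of_nonneg_left (rpow_le_rpow_of_exponent_le (by simp) (by linarith)) hC
    _ ≤ C * x ^ (-s) := mul_le_mul_of_nonneg_left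
        (rpow_le_rpow_of_nonpos hx (Nat.lt_floor_add_one x).le (neg_nonpos.2 hs)) hC
    _ = C * (M ^ (-s) * ((i : ℝ) + 1) ^ (p * s)) := by
        rw [mul_rpow hM.le (by positivity), ← rpow_mul (by positivity)]
        ring_nf

lemma sqrt_tsum_tail_powerAllocation_le {c d : ℕ → ℝ} {A C C' α β s : ℝ} (i : ℕ)
    (hd : Antitone d) (hdpos : ∀ j, 0 < d j) (hdβ : ∀ j : ℕ, d j ≤ C' * ((j : ℝ) + 1) ^ (-β))
    (hc : Summable fun j => c j ^ 2 / d j ^ 2) (hcA : ∑' j, c j ^ 2 / d j ^ 2 ≤ A ^ 2)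
    (hA : 0 ≤ A) (hAα : A ≤ C * ((i : ℝ) + 1) ^ (-α)) (hC' : 0 ≤ C') (hM : 0 < M)
    (hs : 0 ≤ s) (hsβ : s ≤ β) :
    √(∑' j : {j : ℕ // powerAllocation M p i ≤ j}, c j ^ 2) ≤
      C * C' * M ^ (-s) * ((i : ℝ) + 1) ^ (-(α - p * s)) := calc
  _ ≤ d (powerAllocation M p i) * A := sqrt_tsum_tail_sq_le hd hdpos hc hA hcA _
  _ ≤ C' * (M ^ (-s) * ((i : ℝ) + 1) ^ (p * s)) * (C * ((i : ℝ) + 1) ^ (-α)) :=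
      mul_le_mul (apply_powerAllocation_le hdβ hC' hM hs hsβ i) hAα hA (by positivity)
  _ = _ := by
      rw [neg_sub, sub_eq_add_neg, rpow_add (by positivity)]
      ring

end PowerAllocation

/-- Lemma 4.4 (i): sequences are indexed starting from `1`, realized here
by `0`-based functions where index `i : ℕ` stands for `i + 1`; in particular the tail
`∑_{j > m_i}` (1-based) is the sum over `{j : ℕ // m i ≤ j}` (0-based). -/
theorem stmt6 (α β C1 C2 C : ℝ) (hα : 1 < α) (hβ : 0 < β)
    (hC1 : 0 < C1) (hC2 : 0 < C2) (hC : 0 < C)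
    (a d : ℕ → ℝ) (hapos : ∀ i, 0 < a i) (hdpos : ∀ j, 0 < d j)
    (ha : ∀ i : ℕ, a i ≤ C1 * ((i : ℝ) + 1) ^ (-α))
    (hd : ∀ j : ℕ, d j ≤ C2 * ((j : ℝ) + 1) ^ (-β))
    (hdmono : ∀ j, d (j + 1) ≤ d j)
    (c : ℕ → ℕ → ℝ)
    (hcsum : ∀ i, Summable fun j => (c i j) ^ 2 / (d j) ^ 2)
    (hcb : ∀ i, ∑' j, (c i j) ^ 2 / (d j) ^ 2 ≤ C ^ 2 * (a i) ^ 2)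
    (δ : ℝ) (hδ : 0 < δ) :
    ∃ K > (0 : ℝ), ∀ N : ℕ, 1 ≤ N → ∃ m : ℕ → ℕ,
      (∀ i, m (i + 1) ≤ m i) ∧
      (∀ F : Finset ℕ, ∑ i ∈ F, m i ≤ N) ∧
      (Summable fun i => Real.sqrt (∑' j : {j : ℕ // m i ≤ j}, (c i (j : ℕ)) ^ 2)) ∧
      ∑' i, Real.sqrt (∑' j : {j : ℕ // m i ≤ j}, (c i (j : ℕ)) ^ 2) ≤
        K * (N : ℝ) ^ (-(min (α - 1) β) + δ) := by
  obtain ⟨s, p, hs, hsβ, hrate, hp, hq⟩ := exists_exponents_lt hα hβ hδ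
  set Z := ∑' i : ℕ, ((i : ℝ) + 1) ^ (-p)
  set Zq := ∑' i : ℕ, ((i : ℝ) + 1) ^ (-(α - p * s))
  have hZ : 0 < Z := tsum_nat_add_one_rpow_neg_pos hp
  have hZq : 0 < Zq := tsum_nat_add_one_rpow_neg_pos hq
  refine ⟨C * C1 * C2 * Zq * Z ^ s, by positivity, fun N hN => ?_⟩
  set M := (N : ℝ) / Z
  have hM : 0 < M := div_pos (by exact_mod_cast hN) hZ
  have hterm (i : ℕ) := sqrt_tsum_tail_powerAllocation_le (p := p) i
    (antitone_nat_of_succ_le hdmono) hdpos hd (hcsum i) ((mul_pow C (a i) 2).symm ▸ hcb i)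
    (mul_pos hC (hapos i)).le (by rw [mul_assoc]; exact mul_le_mul_of_nonneg_left (ha i) hC.le)
    hC2.le hM hs.le hsβ
  have hsummable := Summable.of_nonneg_of_le (fun _ => sqrt_nonneg _) hterm
    ((summable_nat_add_one_rpow_neg hq).mul_left (C * C1 * C2 * M ^ (-s)))
  refine ⟨powerAllocation M p, fun i => powerAllocation_antitone hM.le (by linarith) i.le_succ,
    fun F => ?_, hsummable, ?_⟩
  · exact_mod_cast (sum_powerAllocation_le hM.le hp F).trans_eq (div_mul_cancel₀ _ hZ.ne')
  calc _ ≤ ∑' i : ℕ, C * C1 * C2 * M ^ (-s) * ((i : ℝ) + 1) ^ (-(α - p * s)) :=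
        hsummable.tsum_le_tsum hterm ((summable_nat_add_one_rpow_neg hq).mul_left _)
    _ = C * C1 * C2 * Zq * Z ^ s * (N : ℝ) ^ (-s) := by
        rw [tsum_mul_left, div_rpow (by positivity) hZ.le, rpow_neg hZ.le, div_inv_eq_mul]
        ring
    _ ≤ _ := by
        gcongr
        exact_mod_cast hN
end

section
/- Let $\alpha > 1$, $\beta > 0$, and $n \in \mathbb{N}$. Define $m_i := \lceil (n/i)^{(\alpha-1)/\beta} \rceil$ for $i \le n$ and $m_i := 0$ for $i > n$. Then there is a constant $K$ depending only on $\alpha, \beta$ such that $\sum_{i\in\mathbb{N}} m_i \le K \cdot \begin{cases} n^{(\alpha-1)/\beta} & \text{if } (\alpha-1)/\beta > 1 \\ n\log(n+1) & \text{if } (\alpha-1)/\beta = 1 \\ n & \text{if } (\alpha-1)/\beta < 1 \end{cases}$ and moreover $\sum_{i \le n} m_i^{-\beta} i^{-\alpha} + \sum_{i > n} i^{-\alpha} \le K\, n^{-\alpha+1}\log(n+1)$. -/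
/-!
Since `m_i ≤ (n/i)^γ + 1` with `γ = (α-1)/β`, the budget is at most `n + n^γ ∑_{i≤n} i^{-γ}`, and
comparing `∑_{i≤n} i^{-γ}` with `∫_1^n x^{-γ} dx` gives the three regimes (bounded for `γ > 1`,
harmonic for `γ = 1`, `≍ n^{1-γ}` for `γ < 1`). Conversely `m_i ≥ (n/i)^γ` and `γβ = α-1` give
`m_i^{-β} i^{-α} ≤ n^{1-α} i^{-1}`, so the head of the error is a harmonic sum times `n^{1-α}`,
while the tail `∑_{i>n} i^{-α}` is at most `∫_n^∞ x^{-α} dx = n^{1-α}/(α-1)`.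
-/

open Finset

lemma sum_Icc_rpow_neg_le {γ : ℝ} (hγ : 0 ≤ γ) (hγ1 : γ ≠ 1) {n : ℕ} (hn : 1 ≤ n) :
    ∑ i ∈ Icc 1 n, (i : ℝ) ^ (-γ) ≤ 1 + ((n : ℝ) ^ (1 - γ) - 1) / (1 - γ) := by
  have anti : AntitoneOn (fun x : ℝ => x ^ (-γ)) (Set.Icc (1 : ℕ) n) :=
    (Real.antitoneOn_rpow_Ioi_of_exponent_nonpos (neg_nonpos.2 hγ)).mono
      fun x hx => lt_of_lt_of_le (by norm_num) hx.1
  have hint : ∫ x in (1 : ℝ)..n, x ^ (-γ) = ((n : ℝ) ^ (1 - γ) - 1) / (1 - γ) := by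
    rw [integral_rpow (Or.inr ⟨by contrapose! hγ1; linarith, fun h => ?_⟩), Real.one_rpow,
      neg_add_eq_sub]
    rw [Set.uIcc_of_le (by exact_mod_cast hn)] at h
    linarith [h.1]
  have htail : ∑ i ∈ Ioc 1 n, (i : ℝ) ^ (-γ) ≤ ((n : ℝ) ^ (1 - γ) - 1) / (1 - γ) := by
    rw [← hint, ← Ico_add_one_add_one_eq_Ioc, ← sum_Ico_add' (fun i : ℕ => (i : ℝ) ^ (-γ))]
    exact_mod_cast anti.sum_le_integral_Ico hn
  rw [Icc_eq_cons_Ioc hn, sum_cons, Nat.cast_one, Real.one_rpow]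
  linarith

lemma sum_Icc_rpow_neg_le_of_one_lt {γ : ℝ} (hγ : 1 < γ) {n : ℕ} (hn : 1 ≤ n) :
    ∑ i ∈ Icc 1 n, (i : ℝ) ^ (-γ) ≤ γ / (γ - 1) := by
  refine (sum_Icc_rpow_neg_le (by linarith) hγ.ne' hn).trans ?_
  have hγ' : 0 < γ - 1 := by linarith
  calc 1 + ((n : ℝ) ^ (1 - γ) - 1) / (1 - γ) = 1 + (1 - (n : ℝ) ^ (1 - γ)) / (γ - 1) := by
        rw [← neg_div_neg_eq, neg_sub, neg_sub]
    _ ≤ 1 + 1 / (γ - 1) := by gcongr; linarith [show 0 ≤ (n : ℝ) ^ (1 - γ) by positivity]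
    _ = γ / (γ - 1) := by field_simp; ring

lemma sum_Icc_rpow_neg_le_of_lt_one {γ : ℝ} (hγ0 : 0 ≤ γ) (hγ : γ < 1) {n : ℕ} (hn : 1 ≤ n) :
    ∑ i ∈ Icc 1 n, (i : ℝ) ^ (-γ) ≤ (n : ℝ) ^ (1 - γ) / (1 - γ) := by
  refine (sum_Icc_rpow_neg_le hγ0 hγ.ne hn).trans ?_
  rw [sub_div, add_sub, add_sub_right_comm]
  have : 1 ≤ 1 / (1 - γ) := by rw [le_div_iff₀ (by linarith)]; linarith
  linarith

lemma tsum_gt_rpow_neg_le {p : ℝ} (hp : 1 < p) {n : ℕ} (hn : 1 ≤ n) :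
    ∑' i : {i : ℕ // n < i}, (i : ℝ) ^ (-p) ≤ (n : ℝ) ^ (1 - p) / (p - 1) := by
  have hn' : (0 : ℝ) < n := by exact_mod_cast hn
  let e : ℕ ≃ {i : ℕ // n < i} :=
    { toFun := fun k => ⟨k + n + 1, by omega⟩
      invFun := fun i => i - n - 1
      left_inv := fun k => by simp only; omega
      right_inv := fun i => by ext; have := i.2; simp only; omega }
  rw [← e.tsum_eq]
  calc ∑' k, ((e k : ℕ) : ℝ) ^ (-p) = ∑' k : ℕ, ((k + n + 1 : ℕ) : ℝ) ^ (-p) := rfl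
    _ ≤ ∫ x in Set.Ioi (n : ℝ), x ^ (-p) :=
        AntitoneOn.tsum_comp_add_le_integral n
          ((Real.antitoneOn_rpow_Ioi_of_exponent_nonpos (by linarith)).mono
            fun x hx => lt_of_lt_of_le hn' hx)
          (integrableOn_Ioi_rpow_of_lt (by linarith) hn')
          fun x hx => (Real.rpow_pos_of_pos (hn'.trans hx) _).le
    _ = (n : ℝ) ^ (1 - p) / (p - 1) := by
        rw [integral_Ioi_rpow_of_lt (by linarith) hn', ← neg_div_neg_eq]
        ring_nf

lemma le_div_log_two_mul_log {c : ℝ} (hc : 0 ≤ c) {n : ℕ} (hn : 1 ≤ n) :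
    c ≤ c / Real.log 2 * Real.log (n + 1) := by
  have hlog2 : 0 < Real.log 2 := Real.log_pos one_lt_two
  have h2 : Real.log 2 ≤ Real.log (n + 1) :=
    Real.log_le_log two_pos (by norm_cast; omega)
  rw [div_mul_eq_mul_div, le_div_iff₀ hlog2]
  exact mul_le_mul_of_nonneg_left h2 hc

lemma sum_Icc_inv_le_one_add_log (n : ℕ) : ∑ i ∈ Icc 1 n, (i : ℝ)⁻¹ ≤ 1 + Real.log n := by
  simpa [harmonic_eq_sum_Icc] using harmonic_le_one_add_log n

section Budget

variable {γ : ℝ} {n : ℕ} {m : ℕ → ℕ}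

lemma sum_ceil_rpow_le (hm : ∀ i ∈ Icc 1 n, m i = ⌈((n : ℝ) / i) ^ γ⌉₊) :
    ∑ i ∈ Icc 1 n, (m i : ℝ) ≤ n + (n : ℝ) ^ γ * ∑ i ∈ Icc 1 n, (i : ℝ) ^ (-γ) := by
  calc ∑ i ∈ Icc 1 n, (m i : ℝ) ≤ ∑ i ∈ Icc 1 n, ((n : ℝ) ^ γ * (i : ℝ) ^ (-γ) + 1) := by
        refine sum_le_sum fun i hi => ?_
        rw [hm i hi, Real.rpow_neg (Nat.cast_nonneg i), ← div_eq_mul_inv,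
          ← Real.div_rpow (Nat.cast_nonneg n) (Nat.cast_nonneg i)]
        exact (Nat.ceil_lt_add_one (by positivity)).le
    _ = n + (n : ℝ) ^ γ * ∑ i ∈ Icc 1 n, (i : ℝ) ^ (-γ) := by
        rw [sum_add_distrib, ← mul_sum]
        simp [add_comm]

lemma sum_ceil_rpow_le_of_one_lt (hγ : 1 < γ) (hn : 1 ≤ n)
    (hm : ∀ i ∈ Icc 1 n, m i = ⌈((n : ℝ) / i) ^ γ⌉₊) :
    ∑ i ∈ Icc 1 n, (m i : ℝ) ≤ (1 + γ / (γ - 1)) * (n : ℝ) ^ γ := by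
  have hnγ : (n : ℝ) ≤ (n : ℝ) ^ γ := by
    simpa using Real.rpow_le_rpow_of_exponent_le (Nat.one_le_cast.2 hn) hγ.le
  have := mul_le_mul_of_nonneg_left (sum_Icc_rpow_neg_le_of_one_lt hγ hn)
    (by positivity : (0 : ℝ) ≤ (n : ℝ) ^ γ)
  linarith [sum_ceil_rpow_le hm]

lemma sum_ceil_rpow_le_of_lt_one (hγ0 : 0 ≤ γ) (hγ : γ < 1) (hn : 1 ≤ n)
    (hm : ∀ i ∈ Icc 1 n, m i = ⌈((n : ℝ) / i) ^ γ⌉₊) :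
    ∑ i ∈ Icc 1 n, (m i : ℝ) ≤ (1 + 1 / (1 - γ)) * n := by
  have := mul_le_mul_of_nonneg_left (sum_Icc_rpow_neg_le_of_lt_one hγ0 hγ hn)
    (by positivity : (0 : ℝ) ≤ (n : ℝ) ^ γ)
  rw [mul_div_assoc', ← Real.rpow_add (by exact_mod_cast hn), add_sub_cancel,
    Real.rpow_one] at this
  have hsplit : (1 + 1 / (1 - γ)) * (n : ℝ) = n + n / (1 - γ) := by ring
  linarith [sum_ceil_rpow_le hm]

lemma sum_ceil_div_le (hn : 1 ≤ n) (hm : ∀ i ∈ Icc 1 n, m i = ⌈((n : ℝ) / i) ^ (1 : ℝ)⌉₊) :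
    ∑ i ∈ Icc 1 n, (m i : ℝ) ≤ (2 / Real.log 2 + 1) * (n * Real.log (n + 1)) := by
  have harmonic := sum_Icc_inv_le_one_add_log n
  simp_rw [← Real.rpow_neg_one] at harmonic
  have hlog : Real.log n ≤ Real.log (n + 1) :=
    Real.log_le_log (by exact_mod_cast hn) (by linarith)
  have h2 := le_div_log_two_mul_log zero_le_two hn
  have := sum_ceil_rpow_le hm
  rw [Real.rpow_one] at this
  nlinarith [(Nat.cast_nonneg n : (0 : ℝ) ≤ n)]

end Budget

lemma exists_sum_ceil_rpow_le {γ : ℝ} (hγ : 0 < γ) :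
    ∃ K > (0 : ℝ), ∀ n : ℕ, 1 ≤ n → ∀ m : ℕ → ℕ,
      (∀ i ∈ Icc 1 n, m i = ⌈((n : ℝ) / i) ^ γ⌉₊) →
      ∑ i ∈ Icc 1 n, (m i : ℝ) ≤
        K * (if 1 < γ then (n : ℝ) ^ γ
             else if γ = 1 then (n : ℝ) * Real.log ((n : ℝ) + 1) else (n : ℝ)) := by
  rcases lt_trichotomy γ 1 with hlt | rfl | hgt
  · have : 0 < 1 - γ := by linarith
    refine ⟨1 + 1 / (1 - γ), by positivity, fun n hn m hm => ?_⟩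
    rw [if_neg hlt.not_gt, if_neg hlt.ne]
    exact sum_ceil_rpow_le_of_lt_one hγ.le hlt hn hm
  · refine ⟨2 / Real.log 2 + 1, by positivity, fun n hn m hm => ?_⟩
    rw [if_neg (lt_irrefl 1), if_pos rfl]
    exact sum_ceil_div_le hn hm
  · have : 0 < γ - 1 := by linarith
    refine ⟨1 + γ / (γ - 1), by positivity, fun n hn m hm => ?_⟩
    rw [if_pos hgt]
    exact sum_ceil_rpow_le_of_one_lt hgt hn hm

section Error

variable {α β : ℝ} {n : ℕ}

lemma ceil_rpow_neg_mul_rpow_neg_le (hβ : 0 < β) (hn : 1 ≤ n) {i : ℕ} (hi : 1 ≤ i) :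
    (⌈((n : ℝ) / i) ^ ((α - 1) / β)⌉₊ : ℝ) ^ (-β) * (i : ℝ) ^ (-α) ≤
      (n : ℝ) ^ (1 - α) * (i : ℝ)⁻¹ := by
  have hi' : (0 : ℝ) < i := by exact_mod_cast hi
  have hn' : (0 : ℝ) < n := by exact_mod_cast hn
  calc _ ≤ (((n : ℝ) / i) ^ ((α - 1) / β)) ^ (-β) * (i : ℝ) ^ (-α) := by
        gcongr ?_ * _
        exact Real.rpow_le_rpow_of_nonpos (by positivity) (Nat.le_ceil _) (neg_nonpos.2 hβ.le)
    _ = (n : ℝ) ^ (1 - α) * (i : ℝ)⁻¹ := by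
        have hexp : (α - 1) / β * -β = 1 - α := by field_simp; ring
        rw [← Real.rpow_mul (by positivity), hexp, Real.div_rpow hn'.le hi'.le, div_mul_eq_mul_div,
          mul_div_assoc, ← Real.rpow_sub hi', ← Real.rpow_neg_one]
        ring_nf

lemma sum_ceil_rpow_neg_mul_rpow_neg_le (hβ : 0 < β) (hn : 1 ≤ n) {m : ℕ → ℕ}
    (hm : ∀ i ∈ Icc 1 n, m i = ⌈((n : ℝ) / i) ^ ((α - 1) / β)⌉₊) :
    ∑ i ∈ Icc 1 n, (m i : ℝ) ^ (-β) * (i : ℝ) ^ (-α) ≤ (n : ℝ) ^ (1 - α) * (1 + Real.log n) := by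
  calc _ ≤ ∑ i ∈ Icc 1 n, (n : ℝ) ^ (1 - α) * (i : ℝ)⁻¹ :=
        sum_le_sum fun i hi => hm i hi ▸ ceil_rpow_neg_mul_rpow_neg_le hβ hn (mem_Icc.1 hi).1
    _ ≤ _ := by
        rw [← mul_sum]
        gcongr
        exact sum_Icc_inv_le_one_add_log n

lemma sum_ceil_rpow_neg_mul_rpow_neg_add_tsum_le (hα : 1 < α) (hβ : 0 < β) (hn : 1 ≤ n)
    {m : ℕ → ℕ} (hm : ∀ i ∈ Icc 1 n, m i = ⌈((n : ℝ) / i) ^ ((α - 1) / β)⌉₊) :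
    ∑ i ∈ Icc 1 n, (m i : ℝ) ^ (-β) * (i : ℝ) ^ (-α) + ∑' i : {i : ℕ // n < i}, (i : ℝ) ^ (-α) ≤
      (α / ((α - 1) * Real.log 2) + 1) * (n : ℝ) ^ (-α + 1) * Real.log (n + 1) := by
  have hα' : 0 < α - 1 := by linarith
  have hlog : Real.log n ≤ Real.log (n + 1) :=
    Real.log_le_log (by exact_mod_cast hn) (by linarith)
  have hc := le_div_log_two_mul_log (c := α / (α - 1)) (by positivity) hn
  rw [div_div] at hc
  rw [neg_add_eq_sub]
  calc _ ≤ (n : ℝ) ^ (1 - α) * (1 + Real.log n) + (n : ℝ) ^ (1 - α) / (α - 1) :=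
        add_le_add (sum_ceil_rpow_neg_mul_rpow_neg_le hβ hn hm) (tsum_gt_rpow_neg_le hα hn)
    _ = (n : ℝ) ^ (1 - α) * (α / (α - 1) + Real.log n) := by
        field_simp
        ring
    _ ≤ (n : ℝ) ^ (1 - α) * ((α / ((α - 1) * Real.log 2) + 1) * Real.log (n + 1)) := by
        gcongr
        linarith
    _ = _ := by ring

end Error

/-- explicit budget/error computation with `m_i = ⌈(n/i)^{(α-1)/β}⌉` for
`1 ≤ i ≤ n` and `m_i = 0` for `i > n` (1-based indexing, encoded by a function on `ℕ`
vanishing at `0` and above `n`): a budget bound for `∑_i m_i` (with the three cases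
according to `(α-1)/β`) and the error bound
`∑_{i ≤ n} m_i^{-β} i^{-α} + ∑_{i > n} i^{-α} ≤ K n^{-α+1} log(n+1)`,
with `K` depending only on `α, β`. -/
theorem stmt14 (α β : ℝ) (hα : 1 < α) (hβ : 0 < β) :
    ∃ K > (0 : ℝ), ∀ n : ℕ, 1 ≤ n → ∀ m : ℕ → ℕ,
      (∀ i : ℕ, 1 ≤ i → i ≤ n → m i = ⌈((n : ℝ) / (i : ℝ)) ^ ((α - 1) / β)⌉₊) →
      (∀ i : ℕ, n < i → m i = 0) → m 0 = 0 →
      ((∑ i ∈ Finset.Icc 1 n, (m i : ℝ)) ≤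
        K * (if 1 < (α - 1) / β then (n : ℝ) ^ ((α - 1) / β)
             else if (α - 1) / β = 1 then (n : ℝ) * Real.log ((n : ℝ) + 1)
             else (n : ℝ))) ∧
      ((∑ i ∈ Finset.Icc 1 n, ((m i : ℝ)) ^ (-β) * (i : ℝ) ^ (-α)) +
          ∑' i : {i : ℕ // n < i}, ((i : ℝ)) ^ (-α) ≤
        K * (n : ℝ) ^ (-α + 1) * Real.log ((n : ℝ) + 1)) := by
  have hα' : 0 < α - 1 := by linarith
  obtain ⟨K, hK, hbudget⟩ := exists_sum_ceil_rpow_le (div_pos hα' hβ)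
  set K' := α / ((α - 1) * Real.log 2) + 1
  refine ⟨max K K', lt_max_of_lt_left hK, fun n hn m hm _ _ => ?_⟩
  have hm' : ∀ i ∈ Icc 1 n, m i = ⌈((n : ℝ) / i) ^ ((α - 1) / β)⌉₊ :=
    fun i hi => hm i (mem_Icc.1 hi).1 (mem_Icc.1 hi).2
  have hlog : 0 ≤ Real.log ((n : ℝ) + 1) := Real.log_nonneg (by simp)
  constructor
  · refine (hbudget n hn m hm').trans (mul_le_mul_of_nonneg_right (le_max_left K K') ?_)
    split_ifs <;> positivity
  · refine (sum_ceil_rpow_neg_mul_rpow_neg_add_tsum_le hα hβ hn hm').trans ?_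
    gcongr
    exact le_max_right K K'
end
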